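/- Let d ≥ 2, s₁, s₂ ∈ ℝ, 0 < p₁, p₂ < ∞ and α ∈ ℝ. Then the equality ‖ Σ_{P∈Γ} |Q_P|^{s₂ − 1/p₂ + 1/2} e_P ‖_{b^{s₁,p₁}_{p₁}(AB)} = ( ν_α(Γ) )^{1/p₁} holds for all Γ ⊂ 𝒬_AB with ν_α(Γ) < ∞ if and only if α = p₁(s₂ − 1/p₂ − s₁ + 1/p₁). -/

import Mathlib

open scoped ENNReal NNReal
open MeasureTheory

namespace Shear

/-- Index set `𝒬_AB` of the shearlet system: direction, scale, shear, translation. -/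
structure Index (d : ℕ) where
  dir : Fin d
  j : ℕ
  l : Fin (d - 1) → ℤ
  k : Fin d → ℤ
  hl : ∀ i, |l i| ≤ 2 ^ j

/-- Lebesgue measure of the anisotropic cube `Q_P`, namely `2^{-j(d+1)}`. -/
noncomputable def cubeVol {d : ℕ} (P : Index d) : ℝ := (2 : ℝ) ^ (-(P.j : ℤ) * (d + 1))

/-- The inverse anisotropic dilation `A_(𝔡)^{-j}`. -/
noncomputable def shearAinv (d : ℕ) (𝔡 : Fin d) (j : ℕ) : Matrix (Fin d) (Fin d) ℝ :=
  Matrix.diagonal fun i => if i = 𝔡 then (4 : ℝ) ^ (-(j : ℤ)) else (2 : ℝ) ^ (-(j : ℤ))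

/-- The shear matrix `B_(𝔡)^{[ℓ]}`. -/
noncomputable def shearB (d : ℕ) (𝔡 : Fin d) (l : Fin (d - 1) → ℤ) : Matrix (Fin d) (Fin d) ℝ :=
  fun i c =>
    if hic : i = c then 1
    else if hi : i = 𝔡 then
      (if hc : (c : ℕ) < (𝔡 : ℕ) then (l ⟨c, by have := 𝔡.isLt; omega⟩ : ℝ)
       else (l ⟨(c : ℕ) - 1, by
          have h1 : (𝔡 : ℕ) ≠ (c : ℕ) := fun h => hic (hi.trans (Fin.ext h))
          have := c.isLt; have := 𝔡.isLt; omega⟩ : ℝ))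
    else 0

/-- The anisotropic cube `Q_P = A_(𝔡)^{-j} B_(𝔡)^{[-ℓ]} ([0,1)^d + k)`. -/
noncomputable def shearQ {d : ℕ} (P : Index d) : Set (Fin d → ℝ) :=
  (fun y => (shearAinv d P.dir P.j * shearB d P.dir fun i => -P.l i).mulVec y) ''
    {y : Fin d → ℝ | ∀ i, (P.k i : ℝ) ≤ y i ∧ y i < (P.k i : ℝ) + 1}

/-- The measure `ν_β(Γ) = Σ_{P ∈ Γ} |Q_P|^β`. -/
noncomputable def nu {d : ℕ} (β : ℝ) (Γ : Set (Index d)) : ℝ≥0∞ :=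
  ∑' P : Γ, ENNReal.ofReal (cubeVol (P : Index d) ^ β)

/-- The quasi-norm of the shear anisotropic inhomogeneous Besov sequence space `b^{s,q}_p(AB)`
(finite integrability parameters). -/
noncomputable def besovNorm {d : ℕ} (s p q : ℝ) (c : Index d → ℂ) : ℝ≥0∞ :=
  (∑' (𝔡 : Fin d) (j : ℕ) (l : {l : Fin (d - 1) → ℤ // ∀ i, |l i| ≤ 2 ^ j}),
      (∑' k : Fin d → ℤ,
          (ENNReal.ofReal (((2 : ℝ) ^ (-(j : ℤ) * (d + 1))) ^ (-s + 1 / p - 1 / 2)) *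
              (‖c ⟨𝔡, j, l.1, k, l.2⟩‖₊ : ℝ≥0∞)) ^ p) ^ (q / p)) ^ (1 / q)

/-- The quasi-norm of the shear anisotropic inhomogeneous Triebel–Lizorkin sequence space
`f^{s,q}_p(AB)`, `0 < q ≤ ∞`. -/
noncomputable def tlNorm {d : ℕ} (s p : ℝ) (q : ℝ≥0∞) (c : Index d → ℂ) : ℝ≥0∞ :=
  (∫⁻ x : Fin d → ℝ,
      (if q = ∞ then
          ⨆ P : Index d,
            ENNReal.ofReal (cubeVol P ^ (-s - 1 / 2)) * (‖c P‖₊ : ℝ≥0∞) *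
              (shearQ P).indicator (fun _ => (1 : ℝ≥0∞)) x
        else
          (∑' P : Index d,
              (ENNReal.ofReal (cubeVol P ^ (-s - 1 / 2)) * (‖c P‖₊ : ℝ≥0∞) *
                  (shearQ P).indicator (fun _ => (1 : ℝ≥0∞)) x) ^ q.toReal) ^ (1 / q.toReal)) ^ p)
    ^ (1 / p)

/-- Non-increasing rearrangement of a sequence with respect to a (set-function) measure `ν`. -/
noncomputable def rearr {D : Type*} (ν : Set D → ℝ≥0∞) (c : D → ℂ) (t : ℝ≥0∞) : ℝ≥0∞ :=
  sInf {lam : ℝ≥0∞ | ν {I | lam < (‖c I‖₊ : ℝ≥0∞)} ≤ t}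

/-- Quasi-norm of the weighted discrete Lorentz space `ℓ^{p,μ}(u,ν)`. -/
noncomputable def lorentzNorm {D : Type*} (ν : Set D → ℝ≥0∞) (u : D → ℝ) (p : ℝ) (μ : ℝ≥0∞)
    (c : D → ℂ) : ℝ≥0∞ :=
  if μ = ∞ then
    ⨆ t : {t : ℝ // 0 < t},
      ENNReal.ofReal (t.1 ^ (1 / p)) * rearr ν (fun I => (u I : ℂ) * c I) (ENNReal.ofReal t.1)
  else
    (∫⁻ t in Set.Ioi (0 : ℝ),
        (ENNReal.ofReal (t ^ (1 / p)) *
              rearr ν (fun I => (u I : ℂ) * c I) (ENNReal.ofReal t)) ^ μ.toReal /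
          ENNReal.ofReal t) ^ (1 / μ.toReal)

/-- `Σ_{t,ν}`: sequences supported on a set `Γ` with `ν(Γ) ≤ t`. -/
def SigmaSet {D : Type*} (ν : Set D → ℝ≥0∞) (t : ℝ≥0∞) : Set (D → ℂ) :=
  {c | ∃ Γ : Set D, ν Γ ≤ t ∧ ∀ P ∉ Γ, c P = 0}

/-- Restricted approximation error `σ_ν(t,s)_𝔣`. -/
noncomputable def approxErr {D : Type*} (F : (D → ℂ) → ℝ≥0∞) (ν : Set D → ℝ≥0∞) (t : ℝ≥0∞)
    (s : D → ℂ) : ℝ≥0∞ :=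
  ⨅ c ∈ SigmaSet ν t, F (fun P => s P - c P)

/-- Quasi-norm of the restricted approximation space `A^ξ_μ(𝔣,ν)`. -/
noncomputable def approxNorm {D : Type*} (F : (D → ℂ) → ℝ≥0∞) (ν : Set D → ℝ≥0∞) (ξ : ℝ)
    (μ : ℝ≥0∞) (s : D → ℂ) : ℝ≥0∞ :=
  if μ = ∞ then
    ⨆ t : {t : ℝ // 0 < t}, ENNReal.ofReal (t.1 ^ ξ) * approxErr F ν (ENNReal.ofReal t.1) s
  else
    (∫⁻ t in Set.Ioi (0 : ℝ),
        (ENNReal.ofReal (t ^ ξ) * approxErr F ν (ENNReal.ofReal t) s) ^ μ.toReal /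
          ENNReal.ofReal t) ^ (1 / μ.toReal)

/-- Peetre `K`-functional for a couple of quasi-normed sequence spaces. -/
noncomputable def Kfun {D : Type*} (X Y : (D → ℂ) → ℝ≥0∞) (t : ℝ≥0∞) (s : D → ℂ) : ℝ≥0∞ :=
  ⨅ a : D → ℂ, X a + t * Y (fun P => s P - a P)

/-- Quasi-norm of the real interpolation space `(X,Y)_{θ,q}`. -/
noncomputable def interpNorm {D : Type*} (X Y : (D → ℂ) → ℝ≥0∞) (θ : ℝ) (q : ℝ≥0∞)
    (s : D → ℂ) : ℝ≥0∞ :=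
  if q = ∞ then
    ⨆ t : {t : ℝ // 0 < t}, ENNReal.ofReal (t.1 ^ (-θ)) * Kfun X Y (ENNReal.ofReal t.1) s
  else
    (∫⁻ t in Set.Ioi (0 : ℝ),
        (ENNReal.ofReal (t ^ (-θ)) * Kfun X Y (ENNReal.ofReal t) s) ^ q.toReal /
          ENNReal.ofReal t) ^ (1 / q.toReal)

end Shear

/-!
Since `‖e_P‖` is a power of `|Q_P|`, the `b^{s₁,p₁}_{p₁}` quasi-norm of `Σ_{P∈Γ} e_P/‖e_P‖` raised
to the power `p₁` is `Σ_{P∈Γ} |Q_P|^{α₀}` with `α₀ = p₁(s₂ − 1/p₂ − s₁ + 1/p₁)`, that is `ν_{α₀}(Γ)`.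
Conversely, testing the identity on a single cube of scale `j = 1`, where `|Q_P| = 2^{-(d+1)} ≠ 1`,
forces `|Q_P|^α = |Q_P|^{α₀}` and hence `α = α₀`.
-/

namespace Shear

variable {d : ℕ}

def indexEquivSigma (d : ℕ) :
    (Σ _ : Fin d, Σ j : ℕ, {l : Fin (d - 1) → ℤ // ∀ i, |l i| ≤ 2 ^ j} × (Fin d → ℤ)) ≃
      Index d where
  toFun x := ⟨x.1, x.2.1, x.2.2.1.1, x.2.2.2, x.2.2.1.2⟩
  invFun P := ⟨P.dir, P.j, ⟨⟨P.l, P.hl⟩, P.k⟩⟩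
  left_inv _ := rfl
  right_inv _ := rfl

theorem tsum_index (f : Index d → ℝ≥0∞) :
    ∑' (𝔡 : Fin d) (j : ℕ) (l : {l : Fin (d - 1) → ℤ // ∀ i, |l i| ≤ 2 ^ j}) (k : Fin d → ℤ),
      f ⟨𝔡, j, l.1, k, l.2⟩ = ∑' P, f P := by
  rw [← (indexEquivSigma d).tsum_eq f, ENNReal.tsum_sigma']
  refine tsum_congr fun 𝔡 => ?_
  rw [ENNReal.tsum_sigma']
  exact tsum_congr fun j =>
    (ENNReal.tsum_prod' (f := fun x => f (indexEquivSigma d ⟨𝔡, j, x⟩))).symm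

theorem besovNorm_self {p : ℝ} (hp : p ≠ 0) (s : ℝ) (c : Index d → ℂ) :
    besovNorm s p p c =
      (∑' P : Index d,
        (ENNReal.ofReal (cubeVol P ^ (-s + 1 / p - 1 / 2)) * (‖c P‖₊ : ℝ≥0∞)) ^ p) ^ (1 / p) := by
  simp only [besovNorm, div_self hp, ENNReal.rpow_one]
  exact congrArg (· ^ (1 / p)) <|
    tsum_index fun P => (ENNReal.ofReal (cubeVol P ^ (-s + 1 / p - 1 / 2)) * (‖c P‖₊ : ℝ≥0∞)) ^ p

theorem cubeVol_pos (P : Index d) : 0 < cubeVol P :=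
  zpow_pos two_pos _

theorem cubeVol_lt_one {P : Index d} (hj : P.j ≠ 0) : cubeVol P < 1 :=
  zpow_lt_one_of_neg₀ one_lt_two (by have : 0 < P.j := Nat.pos_of_ne_zero hj; nlinarith)

theorem ofReal_cubeVol_rpow_mul_nnnorm_rpow (P : Index d) (a b p : ℝ) :
    (ENNReal.ofReal (cubeVol P ^ a) * (‖((cubeVol P ^ b : ℝ) : ℂ)‖₊ : ℝ≥0∞)) ^ p =
      ENNReal.ofReal (cubeVol P ^ (p * (a + b))) := by
  have hv := cubeVol_pos P
  rw [Complex.nnnorm_real, ← enorm_eq_nnnorm, Real.enorm_eq_ofReal (by positivity),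
    ← ENNReal.ofReal_mul (by positivity), ← Real.rpow_add hv,
    ENNReal.ofReal_rpow_of_pos (by positivity), ← Real.rpow_mul hv.le, mul_comm p]

theorem nu_singleton (β : ℝ) (P : Index d) :
    nu β {P} = ENNReal.ofReal (cubeVol P ^ β) :=
  tsum_singleton P fun P => ENNReal.ofReal (cubeVol P ^ β)

theorem besovNorm_indicator_cubeVol_rpow {p : ℝ} (hp : 0 < p) (s t : ℝ) (Γ : Set (Index d)) :
    besovNorm s p p (Γ.indicator fun P => ((cubeVol P ^ t : ℝ) : ℂ)) =
      nu (p * (-s + 1 / p - 1 / 2 + t)) Γ ^ (1 / p) := by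
  rw [besovNorm_self hp.ne', nu,
    tsum_subtype Γ fun P => ENNReal.ofReal (cubeVol P ^ (p * (-s + 1 / p - 1 / 2 + t)))]
  refine congrArg (· ^ (1 / p)) (tsum_congr fun P => ?_)
  by_cases hP : P ∈ Γ
  · simp only [Set.indicator_of_mem hP, ofReal_cubeVol_rpow_mul_nnnorm_rpow]
  · simp [Set.indicator_of_notMem hP, ENNReal.zero_rpow_of_pos hp]

theorem ofReal_cubeVol_rpow_injective {P : Index d} (hj : P.j ≠ 0) :
    Function.Injective fun a : ℝ => ENNReal.ofReal (cubeVol P ^ a) := fun a b h => by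
  have hv := cubeVol_pos P
  rwa [ENNReal.ofReal_eq_ofReal_iff (by positivity) (by positivity),
    Real.rpow_right_inj hv (cubeVol_lt_one hj).ne] at h

end Shear

theorem besov_democracy_iff_general (d : ℕ) (hd : 2 ≤ d) (s₁ s₂ p₁ p₂ : ℝ)
    (hp₁ : 0 < p₁) (α : ℝ) :
    (∀ Γ : Set (Shear.Index d), Shear.nu α Γ < ∞ →
        Shear.besovNorm s₁ p₁ p₁
            (Set.indicator Γ fun P => ((Shear.cubeVol P ^ (s₂ - 1 / p₂ + 1 / 2) : ℝ) : ℂ)) =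
          Shear.nu α Γ ^ (1 / p₁)) ↔
      α = p₁ * (s₂ - 1 / p₂ - s₁ + 1 / p₁) := by
  have key : ∀ Γ : Set (Shear.Index d),
      Shear.besovNorm s₁ p₁ p₁
          (Set.indicator Γ fun P => ((Shear.cubeVol P ^ (s₂ - 1 / p₂ + 1 / 2) : ℝ) : ℂ)) =
        Shear.nu (p₁ * (s₂ - 1 / p₂ - s₁ + 1 / p₁)) Γ ^ (1 / p₁) := fun Γ => by
    rw [Shear.besovNorm_indicator_cubeVol_rpow hp₁]
    congr 2
    ring
  refine ⟨fun h => ?_, fun hα Γ _ => hα ▸ key Γ⟩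
  let P₀ : Shear.Index d := ⟨⟨0, by omega⟩, 1, 0, 0, fun i => by simp⟩
  have hP₀ := h {P₀} (by simp [Shear.nu_singleton])
  rw [key, Shear.nu_singleton, Shear.nu_singleton] at hP₀
  exact (Shear.ofReal_cubeVol_rpow_injective (P := P₀) one_ne_zero
    (ENNReal.rpow_left_injective (one_div_ne_zero hp₁.ne') hP₀)).symm

/-- Theorem 3.4: the Temlyakov property
`‖Σ_{P∈Γ} e_P/‖e_P‖_{b^{s₂,q₂}_{p₂}}‖_{b^{s₁,p₁}_{p₁}(AB)} = ν_α(Γ)^{1/p₁}` holds for all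
`Γ` with `ν_α(Γ) < ∞` if and only if `α = p₁(s₂ − 1/p₂ − s₁ + 1/p₁)`. -/
theorem besov_democracy_iff (d : ℕ) (hd : 2 ≤ d) (s₁ s₂ p₁ p₂ : ℝ)
    (hp₁ : 0 < p₁) (hp₂ : 0 < p₂) (α : ℝ) :
    (∀ Γ : Set (Shear.Index d), Shear.nu α Γ < ∞ →
        Shear.besovNorm s₁ p₁ p₁
            (Set.indicator Γ fun P => ((Shear.cubeVol P ^ (s₂ - 1 / p₂ + 1 / 2) : ℝ) : ℂ)) =
          Shear.nu α Γ ^ (1 / p₁)) ↔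
      α = p₁ * (s₂ - 1 / p₂ - s₁ + 1 / p₁) :=
  besov_democracy_iff_general d hd s₁ s₂ p₁ p₂ hp₁ α
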